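/- arXiv:2002.05240 — 7 statements merged into one kernel-verified Lean document; each statement's English description precedes it below -/
import Mathlib

section
/- Fix an integer k ≥ 2, an integer n ≥ 1, and battlefield values v_1,…,v_n > 0 with V = Σ_{j=1}^n v_j. For j ∈ [n] define F_j(x) = min(1, (V·x/(k·v_j))^{1/(k-1)}) for x ≥ 0. Let μ be a probability measure on ℝ^n such that μ-almost surely a bid vector A satisfies A_j ≥ 0 for all j and Σ_{j=1}^n A_j ≤ 1, and such that for each j ∈ [n] and x ≥ 0, μ{A : A_j ≤ x} = F_j(x). Let ν be any probability measure on ℝ^n that is almost surely nonnegative with Σ_{j=1}^n A_j ≤ 1. If players 1,…,k−1 draw their bid vectors independently from μ and player k draws his bid vector from ν independently of the others, then 𝔼[U_k(A)] ≤ V/k; if moreover ν = μ then 𝔼[U_k(A)] = V/k. In particular, all k players independently sampling bid vectors from μ is a (symmetric mixed) Nash equilibrium of the Colonel Blotto game with unit budgets. -/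
open MeasureTheory

open Classical in
/-- Colonel Blotto payoff: each battlefield's value is split evenly among
the players tied for the highest bid on it. -/
noncomputable def blottoPayoff {k n : ℕ} (v : Fin n → ℝ) (A : Fin k → Fin n → ℝ)
    (i : Fin k) : ℝ :=
  ∑ j, if ∀ i', A i' j ≤ A i j then
      v j / ((Finset.univ.filter fun i' : Fin k => ∀ i'', A i'' j ≤ A i' j).card : ℝ)
    else 0

/-- The strategy profile where player `i₀` plays `ν` and everyone else plays `μ`. -/
noncomputable def devFamily {α : Type*} [MeasurableSpace α] {k : ℕ} (i₀ : Fin k)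
    (μ ν : Measure α) : Fin k → Measure α :=
  fun i => if i = i₀ then ν else μ

theorem devFamily_prob {α : Type*} [MeasurableSpace α] {k : ℕ} (i₀ : Fin k)
    (μ ν : Measure α) (hμ : IsProbabilityMeasure μ) (hν : IsProbabilityMeasure ν) :
    ∀ i, IsProbabilityMeasure (devFamily i₀ μ ν i) := by
  intro i
  unfold devFamily
  split <;> assumption

/-- Expected payoff of player `i` when each player `i'` independently samples its
bid vector from `P i'`. -/
noncomputable def expectedPayoff {k n : ℕ} (v : Fin n → ℝ)
    (P : Fin k → Measure (Fin n → ℝ)) (hP : ∀ i, IsProbabilityMeasure (P i))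
    (i : Fin k) : ℝ :=
  haveI := hP
  ∫ A, blottoPayoff v A i ∂(Measure.pi P)

/-!
Against `k - 1` independent opponents drawing from `μ`, a bid `x` on battlefield `j` is a highest
bid with probability `F_j(x) ^ (k - 1) = min 1 (V x / (k v_j)) ≤ V x / (k v_j)`, so the deviator
collects at most `V / k · 𝔼[x_j]` from battlefield `j`; summing over `j` and using the budget
`∑ j, x_j ≤ 1` bounds the deviator's payoff by `V / k`. When everyone plays `μ`, the payoffs always
sum to `V` and are exchangeable, so each has expectation `V / k`.
-/

lemma measurePreserving_comp_perm {ι α : Type*} [Fintype ι] [MeasurableSpace α]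
    (μ : Measure α) [SigmaFinite μ] (σ : Equiv.Perm ι) :
    MeasurePreserving (fun A : ι → α => A ∘ σ) (Measure.pi fun _ => μ)
      (Measure.pi fun _ => μ) :=
  measurePreserving_arrowCongr' (fun _ => μ) (fun _ => μ) σ.symm (.refl α) fun _ => .id μ

lemma min_one_rpow_inv_pow {k : ℕ} (hk : k ≠ 0) {a : ℝ} (ha : 0 ≤ a) :
    min 1 (a ^ ((1 : ℝ) / k)) ^ k = min 1 a := by
  rcases le_total a 1 with h | h
  · rw [min_eq_right (Real.rpow_le_one ha h (by positivity)), min_eq_right h,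
      ← Real.rpow_natCast, ← Real.rpow_mul ha, one_div_mul_cancel (by exact_mod_cast hk),
      Real.rpow_one]
  · rw [min_eq_left (Real.one_le_rpow h (by positivity)), min_eq_left h, one_pow]

lemma integrable_eval_of_ae_budget {n : ℕ} {ν : Measure (Fin n → ℝ)} [IsFiniteMeasure ν]
    (hν : ∀ᵐ B ∂ν, (∀ j, 0 ≤ B j) ∧ ∑ j, B j ≤ 1) (j : Fin n) :
    Integrable (fun B => B j) ν :=
  .of_bound (measurable_pi_apply j).aestronglyMeasurable 1 <| hν.mono fun B hB => by
    rw [Real.norm_eq_abs, abs_of_nonneg (hB.1 j)]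
    exact (Finset.single_le_sum (fun l _ => hB.1 l) (Finset.mem_univ j)).trans hB.2

lemma devFamily_self {α : Type*} {k : ℕ} [MeasurableSpace α] (i₀ : Fin k) (μ ν : Measure α) :
    devFamily i₀ μ ν i₀ = ν := if_pos rfl

lemma devFamily_of_ne {α : Type*} {k : ℕ} [MeasurableSpace α] {i₀ i : Fin k} (μ ν : Measure α)
    (h : i ≠ i₀) : devFamily i₀ μ ν i = μ := if_neg h

lemma devFamily_same {α : Type*} {k : ℕ} [MeasurableSpace α] (i₀ : Fin k) (μ : Measure α) :
    devFamily i₀ μ μ = fun _ => μ := funext fun _ => ite_self μ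

def topBidSet {k n : ℕ} (j : Fin n) (i : Fin k) : Set (Fin k → Fin n → ℝ) :=
  {A | ∀ i', A i' j ≤ A i j}

lemma measurableSet_topBidSet {k n : ℕ} (j : Fin n) (i : Fin k) :
    MeasurableSet (topBidSet j i) := by
  simp only [topBidSet, Set.ofPred_forall]
  exact .iInter fun i' => measurableSet_le (by fun_prop) (by fun_prop)

section Payoff

variable {k n : ℕ} (v : Fin n → ℝ)

open Classical in
lemma one_le_card_topBidders {A : Fin k → Fin n → ℝ} {i : Fin k} {j : Fin n}
    (h : ∀ i', A i' j ≤ A i j) :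
    (1 : ℝ) ≤ (Finset.univ.filter fun i' : Fin k => ∀ i'', A i'' j ≤ A i' j).card := by
  exact_mod_cast Finset.card_pos.mpr ⟨i, by simpa using h⟩

lemma measurable_blottoPayoff (i : Fin k) : Measurable fun A => blottoPayoff v A i := by
  classical
  refine Finset.measurable_sum _ fun j _ =>
    Measurable.ite (measurableSet_topBidSet j i) ?_ measurable_const
  simp_rw [Finset.natCast_card_filter]
  exact measurable_const.div <| Finset.measurable_sum _ fun i' _ =>
    Measurable.ite (measurableSet_topBidSet j i') measurable_const measurable_const

lemma abs_blottoPayoff_le (A : Fin k → Fin n → ℝ) (i : Fin k) :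
    |blottoPayoff v A i| ≤ ∑ j, |v j| := by
  refine (Finset.abs_sum_le_sum_abs _ _).trans (Finset.sum_le_sum fun j _ => ?_)
  split_ifs with h
  · rw [abs_div, Nat.abs_cast]
    exact div_le_self (abs_nonneg _) (one_le_card_topBidders h)
  · simp

lemma integrable_blottoPayoff (P : Measure (Fin k → Fin n → ℝ)) [IsFiniteMeasure P]
    (i : Fin k) : Integrable (fun A => blottoPayoff v A i) P :=
  .of_bound (measurable_blottoPayoff v i).aestronglyMeasurable _
    (.of_forall fun A => abs_blottoPayoff_le v A i)

lemma blottoPayoff_le_sum_indicator {v : Fin n → ℝ} (hv : ∀ j, 0 ≤ v j)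
    (A : Fin k → Fin n → ℝ) (i : Fin k) :
    blottoPayoff v A i ≤ ∑ j, (topBidSet j i).indicator (fun _ => v j) A := by
  refine Finset.sum_le_sum fun j _ => ?_
  split_ifs with h
  · rw [Set.indicator_of_mem (show A ∈ topBidSet j i from h)]
    exact div_le_self (hv j) (one_le_card_topBidders h)
  · rw [Set.indicator_of_notMem (show A ∉ topBidSet j i from h)]

lemma sum_blottoPayoff [NeZero k] (A : Fin k → Fin n → ℝ) :
    ∑ i, blottoPayoff v A i = ∑ j, v j := by
  classical
  simp only [blottoPayoff]
  rw [Finset.sum_comm]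
  refine Finset.sum_congr rfl fun j _ => ?_
  obtain ⟨i, -, hi⟩ := Finset.exists_max_image Finset.univ (fun i => A i j) Finset.univ_nonempty
  have hcard := one_le_card_topBidders (A := A) (j := j) (i := i) fun i' => hi i' (by simp)
  rw [Finset.sum_ite, Finset.sum_const_zero, add_zero, Finset.sum_const, nsmul_eq_mul]
  field_simp

lemma blottoPayoff_comp_perm (A : Fin k → Fin n → ℝ) (σ : Equiv.Perm (Fin k)) (i : Fin k) :
    blottoPayoff v (A ∘ σ) i = blottoPayoff v A (σ i) := by
  classical
  refine Finset.sum_congr rfl fun j _ => ?_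
  have hwin : ∀ i, (∀ i', (A ∘ σ) i' j ≤ (A ∘ σ) i j) ↔ ∀ i', A i' j ≤ A (σ i) j :=
    fun _ => σ.forall_congr fun _ => Iff.rfl
  have hcard : (Finset.univ.filter fun i : Fin k => ∀ i', (A ∘ σ) i' j ≤ (A ∘ σ) i j).card =
      (Finset.univ.filter fun i : Fin k => ∀ i', A i' j ≤ A i j).card :=
    Finset.card_equiv σ fun i => by simp only [Finset.mem_filter, Finset.mem_univ, true_and, hwin]
  rw [if_congr (hwin i) rfl rfl, hcard]

lemma integral_blottoPayoff_le {v : Fin n → ℝ} (hv : ∀ j, 0 ≤ v j)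
    (P : Measure (Fin k → Fin n → ℝ)) [IsFiniteMeasure P] (i : Fin k) :
    ∫ A, blottoPayoff v A i ∂P ≤ ∑ j, v j * P.real (topBidSet j i) := by
  have hint : ∀ j, Integrable ((topBidSet j i).indicator fun _ => v j) P := fun j =>
    (integrable_const (v j)).indicator (measurableSet_topBidSet j i)
  calc ∫ A, blottoPayoff v A i ∂P
      ≤ ∫ A, ∑ j, (topBidSet j i).indicator (fun _ => v j) A ∂P :=
        integral_mono (integrable_blottoPayoff v P i) (integrable_finsetSum _ fun j _ => hint j)
          fun A => blottoPayoff_le_sum_indicator hv A i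
    _ = ∑ j, v j * P.real (topBidSet j i) := by
        simp only [integral_finsetSum _ fun j _ => hint j,
          integral_indicator_const _ (measurableSet_topBidSet _ i), smul_eq_mul, mul_comm]

end Payoff

theorem integral_blottoPayoff_pi_const {k n : ℕ} [NeZero k] (v : Fin n → ℝ)
    (μ : Measure (Fin n → ℝ)) [IsProbabilityMeasure μ] (i : Fin k) :
    ∫ A, blottoPayoff v A i ∂(Measure.pi fun _ => μ) = (∑ j, v j) / k := by
  have hsymm : ∀ i', ∫ A, blottoPayoff v A i' ∂(Measure.pi fun _ => μ) =
      ∫ A, blottoPayoff v A i ∂(Measure.pi fun _ => μ) := fun i' => by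
    rw [← (measurePreserving_comp_perm μ (Equiv.swap i' i)).integral_comp
      (MeasurableEquiv.arrowCongr' (Equiv.swap i' i).symm (.refl _)).measurableEmbedding]
    simp_rw [blottoPayoff_comp_perm, Equiv.swap_apply_left]
  have hsum : ∑ i' : Fin k, ∫ A, blottoPayoff v A i' ∂(Measure.pi fun _ => μ) = ∑ j, v j := by
    rw [← integral_finsetSum _ fun i' _ => integrable_blottoPayoff v _ i']
    simp [sum_blottoPayoff]
  rw [Finset.sum_congr rfl fun i' _ => hsymm i', Finset.sum_const, Finset.card_univ,
    Fintype.card_fin, nsmul_eq_mul] at hsum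
  rw [← hsum, mul_div_cancel_left₀ _ (NeZero.ne _)]

section Deviation

variable {k n : ℕ} (μ ν : Measure (Fin n → ℝ))

theorem pi_devFamily_topBidSet [SigmaFinite μ] [SigmaFinite ν] (i₀ : Fin (k + 1))
    (j : Fin n) :
    Measure.pi (devFamily i₀ μ ν) (topBidSet j i₀) = ∫⁻ B, μ {C | C j ≤ B j} ^ k ∂ν := by
  have : ∀ i, SigmaFinite (devFamily i₀ μ ν i) := fun i => by
    unfold devFamily; split <;> infer_instance
  let T := {p : (Fin n → ℝ) × (Fin k → Fin n → ℝ) | ∀ t, p.2 t j ≤ p.1 j}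
  have hT : MeasurableSet T := by
    simp only [T, Set.ofPred_forall]
    exact .iInter fun t => measurableSet_le (by fun_prop) (by fun_prop)
  have hpre : topBidSet j i₀ = MeasurableEquiv.piFinSuccAbove _ i₀ ⁻¹' T := by
    ext A
    simp [topBidSet, T, Fin.forall_iff_succAbove i₀, Fin.removeNth]
  rw [hpre, (measurePreserving_piFinSuccAbove (devFamily i₀ μ ν) i₀).measure_preimage
    hT.nullMeasurableSet, devFamily_self, Measure.prod_apply hT]
  refine lintegral_congr fun B => ?_
  have hslice : Prod.mk B ⁻¹' T = Set.univ.pi fun _ => {C | C j ≤ B j} := by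
    ext; simp [T]
  simp_rw [hslice, Measure.pi_pi, devFamily_of_ne μ ν (Fin.succAbove_ne i₀ _),
    Finset.prod_const, Finset.card_univ, Fintype.card_fin]

lemma measureReal_pi_devFamily_topBidSet_le [IsProbabilityMeasure μ] [IsProbabilityMeasure ν]
    (i₀ : Fin (k + 1)) {j : Fin n} {c : ℝ} (hc : 0 ≤ c)
    (hF : ∀ x, 0 ≤ x → μ {C | C j ≤ x} ^ k ≤ ENNReal.ofReal (c * x))
    (hν : ∀ᵐ B ∂ν, 0 ≤ B j) (hint : Integrable (fun B => B j) ν) :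
    (Measure.pi (devFamily i₀ μ ν)).real (topBidSet j i₀) ≤ c * ∫ B, B j ∂ν := by
  refine ENNReal.toReal_le_of_le_ofReal (mul_nonneg hc (integral_nonneg_of_ae hν)) ?_
  rw [pi_devFamily_topBidSet, ENNReal.ofReal_mul hc, ofReal_integral_eq_lintegral_ofReal hint hν,
    ← lintegral_const_mul' _ _ ENNReal.ofReal_ne_top]
  exact lintegral_mono_ae <| hν.mono fun B hB => (hF _ hB).trans_eq (ENNReal.ofReal_mul hc)

theorem integral_blottoPayoff_pi_devFamily_le [IsProbabilityMeasure μ] [IsProbabilityMeasure ν]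
    {v : Fin n → ℝ} (hv : ∀ j, 0 < v j) (i₀ : Fin (k + 1))
    (hF : ∀ j x, 0 ≤ x →
      μ {C | C j ≤ x} ^ k ≤ ENNReal.ofReal ((∑ l, v l) / ((k + 1) * v j) * x))
    (hνvalid : ∀ᵐ B ∂ν, (∀ j, 0 ≤ B j) ∧ ∑ j, B j ≤ 1) :
    ∫ A, blottoPayoff v A i₀ ∂(Measure.pi (devFamily i₀ μ ν)) ≤ (∑ l, v l) / (k + 1) := by
  have : ∀ i, IsProbabilityMeasure (devFamily i₀ μ ν i) := devFamily_prob i₀ μ ν ‹_› ‹_›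
  have hint := integrable_eval_of_ae_budget hνvalid
  have hV : 0 ≤ ∑ l, v l := Finset.sum_nonneg fun l _ => (hv l).le
  have hmass : ∫ B, ∑ j, B j ∂ν ≤ 1 := by
    simpa using integral_mono_ae (integrable_finsetSum _ fun j _ => hint j)
      (integrable_const 1) (hνvalid.mono fun B hB => hB.2)
  calc ∫ A, blottoPayoff v A i₀ ∂(Measure.pi (devFamily i₀ μ ν))
      ≤ ∑ j, v j * (Measure.pi (devFamily i₀ μ ν)).real (topBidSet j i₀) :=
        integral_blottoPayoff_le (fun j => (hv j).le) _ i₀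
    _ ≤ ∑ j, v j * ((∑ l, v l) / ((k + 1) * v j) * ∫ B, B j ∂ν) := by
        gcongr with j
        · exact (hv j).le
        · exact measureReal_pi_devFamily_topBidSet_le μ ν i₀
            (div_nonneg hV (by have := hv j; positivity)) (hF j)
            (hνvalid.mono fun B hB => hB.1 j) (hint j)
    _ = (∑ l, v l) / (k + 1) * ∫ B, ∑ j, B j ∂ν := by
        rw [integral_finsetSum _ fun j _ => hint j, Finset.mul_sum]
        refine Finset.sum_congr rfl fun j _ => ?_
        have := (hv j).ne'
        field_simp
    _ ≤ (∑ l, v l) / (k + 1) := mul_le_of_le_one_right (by positivity) hmass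

end Deviation

theorem stmt1 (k n : ℕ) (hk : 2 ≤ k) (v : Fin n → ℝ) (hv : ∀ j, 0 < v j)
    (μ : Measure (Fin n → ℝ)) (hμ : IsProbabilityMeasure μ)
    (hμcdf : ∀ j, ∀ x : ℝ, 0 ≤ x →
      μ {A : Fin n → ℝ | A j ≤ x} =
        ENNReal.ofReal (min 1
          (((∑ l, v l) * x / ((k : ℝ) * v j)) ^ ((1 : ℝ) / ((k : ℝ) - 1)))))
    (ν : Measure (Fin n → ℝ)) (hν : IsProbabilityMeasure ν)
    (hνvalid : ∀ᵐ A ∂ν, (∀ j, 0 ≤ A j) ∧ ∑ j, A j ≤ 1) :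
    expectedPayoff v (devFamily (⟨k - 1, by omega⟩ : Fin k) μ ν)
        (devFamily_prob _ μ ν hμ hν) (⟨k - 1, by omega⟩ : Fin k) ≤ (∑ l, v l) / k ∧
    (ν = μ →
      expectedPayoff v (devFamily (⟨k - 1, by omega⟩ : Fin k) μ ν)
        (devFamily_prob _ μ ν hμ hν) (⟨k - 1, by omega⟩ : Fin k) = (∑ l, v l) / k) := by
  obtain ⟨k, rfl⟩ : ∃ k', k = k' + 1 := ⟨k - 1, by omega⟩
  refine ⟨?_, fun hνμ => ?_⟩
  · have hF : ∀ j x, 0 ≤ x →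
        μ {C | C j ≤ x} ^ k ≤ ENNReal.ofReal ((∑ l, v l) / ((k + 1) * v j) * x) := by
      intro j x hx
      have hV : 0 ≤ ∑ l, v l := Finset.sum_nonneg fun l _ => (hv l).le
      have := hv j
      rw [hμcdf j x hx, ← ENNReal.ofReal_pow (by positivity)]
      push_cast
      rw [add_sub_cancel_right, min_one_rpow_inv_pow (by omega) (by positivity)]
      exact ENNReal.ofReal_le_ofReal ((min_le_right _ _).trans_eq (by ring))
    unfold expectedPayoff
    push_cast
    exact integral_blottoPayoff_pi_devFamily_le μ ν hv _ hF hνvalid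
  · subst hνμ
    simp only [expectedPayoff, devFamily_same]
    exact integral_blottoPayoff_pi_const v ν _
end

section
/- Let n ≥ m ≥ 1 be integers and let s_1,…,s_n be real numbers with 0 ≤ s_j ≤ 1 for all j and Σ_{j=1}^n s_j = m. Then there exists a matrix M ∈ ℝ^{n×m} such that MᵀM = I_m (the columns of M are orthonormal) and the j-th row M_{j,*} of M satisfies ‖M_{j,*}‖² = s_j for every j ∈ [n]. -/
/-!
Induct on `n`, merging the first two prescribed values `x, y`. If `x + y ≤ 1`, realize
`(x + y, s₃, …)` with the same number of columns and split the first row `v` into the two rows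
`a • v, b • v`, where `a² + b² = 1` and `a² (x + y) = x`. If `x + y > 1`, realize
`(x + y - 1, s₃, …)` with one column fewer, split the first row in the same way and adjoin the
unit column `(b, -a, 0, …)`, which is orthogonal to the others. The first two rows then have
squared norms `a² t + b²` and `b² t + a²` with `t = x + y - 1`; these are `x` and `y` once
`a² (2 - x - y) = 1 - x`.
-/

open Matrix

theorem exists_sq_add_sq_eq_one_of_nonneg {x y : ℝ} (hx : 0 ≤ x) (hy : 0 ≤ y) :
    ∃ a b : ℝ, a ^ 2 + b ^ 2 = 1 ∧ a ^ 2 * (x + y) = x ∧ b ^ 2 * (x + y) = y := by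
  rcases (add_nonneg hx hy).eq_or_lt with hxy | hxy
  · exact ⟨1, 0, by norm_num, by linarith, by linarith⟩
  · refine ⟨√(x / (x + y)), √(y / (x + y)), ?_, ?_, ?_⟩ <;>
      simp only [Real.sq_sqrt (div_nonneg hx hxy.le), Real.sq_sqrt (div_nonneg hy hxy.le)] <;>
      field_simp

def IsRowNormSqOfIsometry (κ : Type*) [Fintype κ] [DecidableEq κ] {ι : Type*} [Fintype ι]
    (s : ι → ℝ) : Prop :=
  ∃ M : Matrix ι κ ℝ, Mᵀ * M = 1 ∧ ∀ i, M i ⬝ᵥ M i = s i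

variable {κ : Type*}

def splitHeadRow {p : ℕ} (a b : ℝ) (M : Matrix (Fin (p + 1)) κ ℝ) :
    Matrix (Fin (p + 2)) κ ℝ :=
  of (Fin.cons (a • M 0) (Fin.cons (b • M 0) (Fin.tail M)))

section splitHeadRow

variable {p : ℕ} (a b : ℝ) (M : Matrix (Fin (p + 1)) κ ℝ)

@[simp] theorem splitHeadRow_zero : splitHeadRow a b M 0 = a • M 0 := rfl

@[simp] theorem splitHeadRow_one : splitHeadRow a b M 1 = b • M 0 := rfl

@[simp] theorem splitHeadRow_succ_succ (i : Fin p) :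
    splitHeadRow a b M i.succ.succ = M i.succ := rfl

theorem splitHeadRow_zero_dotProduct [Fintype κ] :
    splitHeadRow a b M 0 ⬝ᵥ splitHeadRow a b M 0 = a ^ 2 * (M 0 ⬝ᵥ M 0) := by
  simp only [splitHeadRow_zero, smul_dotProduct, dotProduct_smul, smul_eq_mul]
  ring

theorem splitHeadRow_one_dotProduct [Fintype κ] :
    splitHeadRow a b M 1 ⬝ᵥ splitHeadRow a b M 1 = b ^ 2 * (M 0 ⬝ᵥ M 0) := by
  simp only [splitHeadRow_one, smul_dotProduct, dotProduct_smul, smul_eq_mul]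
  ring

end splitHeadRow

theorem transpose_mul_self_splitHeadRow {p : ℕ} {a b : ℝ} (hab : a ^ 2 + b ^ 2 = 1)
    (M : Matrix (Fin (p + 1)) κ ℝ) :
    (splitHeadRow a b M)ᵀ * splitHeadRow a b M = Mᵀ * M := by
  ext k l
  simp only [splitHeadRow, mul_apply, transpose_apply, of_apply, Fin.sum_univ_succ, Fin.cons_zero,
    Fin.cons_succ, Fin.tail, Pi.smul_apply, smul_eq_mul]
  linear_combination (M 0 k * M 0 l) * hab

def consCol {ι : Type*} {q : ℕ} (c : ι → ℝ) (Y : Matrix ι (Fin q) ℝ) :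
    Matrix ι (Fin (q + 1)) ℝ :=
  of fun i => vecCons (c i) (Y i)

section consCol

variable {ι : Type*} {q : ℕ} (c : ι → ℝ) (Y : Matrix ι (Fin q) ℝ) (i : ι)

@[simp] theorem consCol_apply : consCol c Y i = vecCons (c i) (Y i) := rfl

theorem consCol_dotProduct_self :
    consCol c Y i ⬝ᵥ consCol c Y i = c i ^ 2 + Y i ⬝ᵥ Y i := by
  rw [consCol_apply, cons_dotProduct_cons, sq]

end consCol

theorem transpose_mul_self_consCol {ι : Type*} [Fintype ι] {q : ℕ} {c : ι → ℝ}
    {Y : Matrix ι (Fin q) ℝ} (hc : c ⬝ᵥ c = 1) (hcY : c ᵥ* Y = 0) (hY : Yᵀ * Y = 1) :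
    (consCol c Y)ᵀ * consCol c Y = 1 := by
  ext k l
  induction k using Fin.cases <;> induction l using Fin.cases <;>
    simp only [consCol, mul_apply, transpose_apply, of_apply, one_apply, Fin.succ_inj,
      Fin.succ_ne_zero, (Fin.succ_ne_zero _).symm, if_true, if_false]
  · exact hc
  · simpa [vecMul, dotProduct] using congrFun hcY _
  · simpa [vecMul, dotProduct, mul_comm] using congrFun hcY _
  · simpa [mul_apply, one_apply] using congrFun₂ hY _ _

theorem IsRowNormSqOfIsometry.cons_cons_of_cons_add [Fintype κ] [DecidableEq κ] {p : ℕ}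
    {x y : ℝ} {t : Fin p → ℝ} (hx : 0 ≤ x) (hy : 0 ≤ y)
    (h : IsRowNormSqOfIsometry κ (Fin.cons (x + y) t)) :
    IsRowNormSqOfIsometry κ (Fin.cons x (Fin.cons y t)) := by
  obtain ⟨M, hM, hrow⟩ := h
  obtain ⟨a, b, hab, ha, hb⟩ := exists_sq_add_sq_eq_one_of_nonneg hx hy
  have h0 : M 0 ⬝ᵥ M 0 = x + y := hrow 0
  refine ⟨splitHeadRow a b M, (transpose_mul_self_splitHeadRow hab M).trans hM,
    Fin.cases ?_ (Fin.cases ?_ fun i => ?_)⟩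
  · rw [splitHeadRow_zero_dotProduct, h0, ha, Fin.cons_zero]
  · rw [Fin.succ_zero_eq_one, splitHeadRow_one_dotProduct, h0, hb, Fin.cons_one, Fin.cons_zero]
  · simpa using hrow i.succ

theorem IsRowNormSqOfIsometry.cons_cons_of_cons_add_sub_one {p q : ℕ}
    {x y : ℝ} {t : Fin p → ℝ} (hx : x ≤ 1) (hy : y ≤ 1)
    (h : IsRowNormSqOfIsometry (Fin q) (Fin.cons (x + y - 1) t)) :
    IsRowNormSqOfIsometry (Fin (q + 1)) (Fin.cons x (Fin.cons y t)) := by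
  obtain ⟨M, hM, hrow⟩ := h
  obtain ⟨a, b, hab, ha, hb⟩ :=
    exists_sq_add_sq_eq_one_of_nonneg (sub_nonneg.2 hx) (sub_nonneg.2 hy)
  have h0 : M 0 ⬝ᵥ M 0 = x + y - 1 := hrow 0
  let c : Fin (p + 2) → ℝ := vecCons b (vecCons (-a) 0)
  have hc : c ⬝ᵥ c = 1 := by
    simp only [c, dotProduct, Fin.sum_univ_succ, cons_val_zero, cons_val_succ, Pi.zero_apply,
      mul_zero, Finset.sum_const_zero, add_zero]
    linear_combination hab
  have hcY : c ᵥ* splitHeadRow a b M = 0 := by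
    ext l
    simp only [c, vecMul, dotProduct, Fin.sum_univ_succ, cons_val_zero, cons_val_succ,
      Fin.succ_zero_eq_one, splitHeadRow_zero, splitHeadRow_one, splitHeadRow_succ_succ,
      Pi.smul_apply, smul_eq_mul, Pi.zero_apply, zero_mul, Finset.sum_const_zero, add_zero]
    ring
  refine ⟨consCol c (splitHeadRow a b M), transpose_mul_self_consCol hc hcY
    ((transpose_mul_self_splitHeadRow hab M).trans hM), Fin.cases ?_ (Fin.cases ?_ fun i => ?_)⟩
  · rw [consCol_dotProduct_self, splitHeadRow_zero_dotProduct, h0, Fin.cons_zero,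
      show c 0 = b from rfl]
    linear_combination hab - ha
  · rw [Fin.succ_zero_eq_one, consCol_dotProduct_self, splitHeadRow_one_dotProduct, h0,
      Fin.cons_one, Fin.cons_zero, show c 1 = -a from rfl]
    linear_combination hab - hb
  · simpa [c] using hrow i.succ

theorem isRowNormSqOfIsometry_of_sum_eq :
    ∀ {n : ℕ} (m : ℕ) (s : Fin n → ℝ), (∀ j, 0 ≤ s j) → (∀ j, s j ≤ 1) →
      ∑ j, s j = m → IsRowNormSqOfIsometry (Fin m) s
  | 0, m, s, _, _, hsum => by
    obtain rfl : m = 0 := by simpa [eq_comm] using hsum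
    exact ⟨0, by ext k; exact k.elim0, fun j => j.elim0⟩
  | 1, m, s, _, hs1, hsum => by
    rw [Fin.sum_univ_one] at hsum
    have hm : m ≤ 1 := by exact_mod_cast hsum ▸ hs1 0
    have : Subsingleton (Fin m) := Fin.subsingleton_iff_le_one.2 hm
    refine ⟨of fun _ _ => 1, ?_, fun j => ?_⟩
    · ext k l
      obtain rfl := Subsingleton.elim k l
      simp [mul_apply]
    · simpa [Subsingleton.elim j 0, dotProduct] using hsum.symm
  | n + 2, m, s, hs0, hs1, hsum => by
    induction s using Fin.consCases with | cons x s => ?_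
    induction s using Fin.consCases with | cons y t => ?_
    simp only [Fin.forall_fin_succ, Fin.cons_zero, Fin.cons_succ, Fin.sum_cons] at hs0 hs1 hsum
    obtain ⟨hx0, hy0, ht0⟩ := hs0
    obtain ⟨hx1, hy1, ht1⟩ := hs1
    rcases le_or_gt (x + y) 1 with hxy | hxy
    · refine .cons_cons_of_cons_add hx0 hy0 (isRowNormSqOfIsometry_of_sum_eq m _ ?_ ?_ ?_) <;>
        simp only [Fin.forall_fin_succ, Fin.cons_zero, Fin.cons_succ, Fin.sum_cons]
      · exact ⟨add_nonneg hx0 hy0, ht0⟩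
      · exact ⟨hxy, ht1⟩
      · linarith
    · have ht : 0 ≤ ∑ i, t i := Finset.sum_nonneg fun i _ => ht0 i
      obtain ⟨q, rfl⟩ : ∃ q, m = q + 1 :=
        Nat.exists_eq_succ_of_ne_zero (by rintro rfl; push_cast at hsum; linarith)
      refine .cons_cons_of_cons_add_sub_one hx1 hy1
        (isRowNormSqOfIsometry_of_sum_eq q _ ?_ ?_ ?_) <;>
        simp only [Fin.forall_fin_succ, Fin.cons_zero, Fin.cons_succ, Fin.sum_cons]
      · exact ⟨by linarith, ht0⟩
      · exact ⟨by linarith, ht1⟩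
      · push_cast at hsum
        linarith

theorem stmt7_general (n m : ℕ) (s : Fin n → ℝ)
    (hs0 : ∀ j, 0 ≤ s j) (hs1 : ∀ j, s j ≤ 1) (hsum : ∑ j, s j = (m : ℝ)) :
    ∃ M : Matrix (Fin n) (Fin m) ℝ,
      M.transpose * M = 1 ∧ ∀ j, ∑ l, (M j l) ^ 2 = s j := by
  obtain ⟨M, hM, hrow⟩ := isRowNormSqOfIsometry_of_sum_eq m s hs0 hs1 hsum
  exact ⟨M, hM, fun j => by simpa [dotProduct, sq] using hrow j⟩

theorem stmt7 (n m : ℕ) (hm : 1 ≤ m) (hmn : m ≤ n) (s : Fin n → ℝ)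
    (hs0 : ∀ j, 0 ≤ s j) (hs1 : ∀ j, s j ≤ 1) (hsum : ∑ j, s j = (m : ℝ)) :
    ∃ M : Matrix (Fin n) (Fin m) ℝ,
      M.transpose * M = 1 ∧ ∀ j, ∑ l, (M j l) ^ 2 = s j :=
  stmt7_general n m s hs0 hs1 hsum
end

section
/- Let m ≥ 1 be an integer, let u_1, u_2 ∈ ℝ^m satisfy u_1·u_2 = 0, and let t_1, t_2 ∈ ℝ satisfy ‖u_1‖² ≥ t_1 ≥ t_2 ≥ ‖u_2‖². Then there exist real numbers a, b with a² + b² = 1 such that the vectors w_1 = a·u_1 − b·u_2 and w_2 = b·u_1 + a·u_2 satisfy: (i) for every x ∈ ℝ^m, (w_1·x)² + (w_2·x)² = (u_1·x)² + (u_2·x)² (equivalently, w_1w_1ᵀ + w_2w_2ᵀ = u_1u_1ᵀ + u_2u_2ᵀ as m×m matrices); (ii) ‖w_1‖² ≥ t_1 ≥ t_2 ≥ ‖w_2‖²; and (iii) ‖w_1‖² = t_1 or ‖w_2‖² = t_2. -/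
/-!
Rotating the pair `(u₁, u₂)` by `(a, b)` with `a² + b² = 1` preserves `(u₁·x)² + (u₂·x)²`, and
since `u₁ ⊥ u₂` it gives `‖w₁‖² = A - b²(A - B)` and `‖w₂‖² = B + b²(A - B)`, where `A = ‖u₁‖²`,
`B = ‖u₂‖²`. So it suffices to move the amount `δ = min (A - t₁) (t₂ - B)` from `A` to `B`;
this is possible because `t₂ ≤ t₁` forces `2δ ≤ A - B`.
-/

open Set

section Rotation

variable {ι R : Type*} [Fintype ι] [CommRing R]

theorem sq_dotProduct_rotate_add_sq {a b : R} (hab : a ^ 2 + b ^ 2 = 1) (u v x : ι → R) :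
    ((a • u - b • v) ⬝ᵥ x) ^ 2 + ((b • u + a • v) ⬝ᵥ x) ^ 2 = (u ⬝ᵥ x) ^ 2 + (v ⬝ᵥ x) ^ 2 := by
  simp only [sub_dotProduct, add_dotProduct, smul_dotProduct, smul_eq_mul]
  linear_combination ((u ⬝ᵥ x) ^ 2 + (v ⬝ᵥ x) ^ 2) * hab

theorem dotProduct_self_rotate_fst {u v : ι → R} (huv : u ⬝ᵥ v = 0) (a b : R) :
    (a • u - b • v) ⬝ᵥ (a • u - b • v) = a ^ 2 * (u ⬝ᵥ u) + b ^ 2 * (v ⬝ᵥ v) := by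
  simp only [sub_dotProduct, dotProduct_sub, smul_dotProduct, dotProduct_smul, smul_eq_mul,
    dotProduct_comm v u, huv]
  ring

theorem dotProduct_self_rotate_snd {u v : ι → R} (huv : u ⬝ᵥ v = 0) (a b : R) :
    (b • u + a • v) ⬝ᵥ (b • u + a • v) = b ^ 2 * (u ⬝ᵥ u) + a ^ 2 * (v ⬝ᵥ v) := by
  simp only [add_dotProduct, dotProduct_add, smul_dotProduct, dotProduct_smul, smul_eq_mul,
    dotProduct_comm v u, huv]
  ring

end Rotation

section Interlacing

variable {A B t₁ t₂ : ℝ}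

theorem exists_mem_Icc_interlacing (h₁ : t₁ ≤ A) (h₁₂ : t₂ ≤ t₁) (h₂ : B ≤ t₂) :
    ∃ s ∈ Icc (0 : ℝ) 1, t₁ ≤ A - s * (A - B) ∧ B + s * (A - B) ≤ t₂ ∧
      (A - s * (A - B) = t₁ ∨ B + s * (A - B) = t₂) := by
  set δ := min (A - t₁) (t₂ - B)
  have hδ₀ : 0 ≤ δ := le_min (by linarith) (by linarith)
  have hδ₁ : δ ≤ A - t₁ := min_le_left _ _
  have hδ₂ : δ ≤ t₂ - B := min_le_right _ _
  -- for `A = B` this relies on `δ / 0 = 0`, with `δ = 0` forced by `2δ ≤ A - B`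
  have hδs : δ / (A - B) * (A - B) = δ := by
    rcases eq_or_ne A B with rfl | hAB
    · linarith
    · exact div_mul_cancel₀ δ (sub_ne_zero.mpr hAB)
  refine ⟨δ / (A - B),
    ⟨div_nonneg hδ₀ (by linarith), div_le_one_of_le₀ (by linarith) (by linarith)⟩,
    ?_, ?_, ?_⟩ <;> rw [hδs]
  · linarith
  · linarith
  · rcases (min_choice (A - t₁) (t₂ - B) : δ = A - t₁ ∨ δ = t₂ - B) with h | h
    · exact Or.inl (by linarith)
    · exact Or.inr (by linarith)

theorem exists_sq_add_sq_eq_one_interlacing (h₁ : t₁ ≤ A) (h₁₂ : t₂ ≤ t₁) (h₂ : B ≤ t₂) :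
    ∃ a b : ℝ, a ^ 2 + b ^ 2 = 1 ∧ t₁ ≤ a ^ 2 * A + b ^ 2 * B ∧ b ^ 2 * A + a ^ 2 * B ≤ t₂ ∧
      (a ^ 2 * A + b ^ 2 * B = t₁ ∨ b ^ 2 * A + a ^ 2 * B = t₂) := by
  obtain ⟨s, ⟨hs₀, hs₁⟩, hw₁, hw₂, heq⟩ := exists_mem_Icc_interlacing h₁ h₁₂ h₂
  have ha : √(1 - s) ^ 2 = 1 - s := Real.sq_sqrt (by linarith)
  have hb : √s ^ 2 = s := Real.sq_sqrt hs₀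
  have hfst : (1 - s) * A + s * B = A - s * (A - B) := by ring
  have hsnd : s * A + (1 - s) * B = B + s * (A - B) := by ring
  refine ⟨√(1 - s), √s, ?_, ?_⟩ <;> rw [ha, hb]
  · ring
  · rw [hfst, hsnd]
    exact ⟨hw₁, hw₂, heq⟩

end Interlacing

theorem stmt8_general (m : ℕ) (u₁ u₂ : Fin m → ℝ)
    (horth : ∑ i, u₁ i * u₂ i = 0) (t₁ t₂ : ℝ)
    (h₁ : t₁ ≤ ∑ i, u₁ i * u₁ i) (h₁₂ : t₂ ≤ t₁) (h₂ : ∑ i, u₂ i * u₂ i ≤ t₂) :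
    ∃ a b : ℝ, a ^ 2 + b ^ 2 = 1 ∧
      ∀ w₁ w₂ : Fin m → ℝ,
        w₁ = (fun i => a * u₁ i - b * u₂ i) → w₂ = (fun i => b * u₁ i + a * u₂ i) →
        (∀ x : Fin m → ℝ,
          (∑ i, w₁ i * x i) ^ 2 + (∑ i, w₂ i * x i) ^ 2 =
            (∑ i, u₁ i * x i) ^ 2 + (∑ i, u₂ i * x i) ^ 2) ∧
        (t₁ ≤ ∑ i, w₁ i * w₁ i ∧ ∑ i, w₂ i * w₂ i ≤ t₂) ∧
        (∑ i, w₁ i * w₁ i = t₁ ∨ ∑ i, w₂ i * w₂ i = t₂) := by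
  obtain ⟨a, b, hab, hw₁, hw₂, heq⟩ := exists_sq_add_sq_eq_one_interlacing h₁ h₁₂ h₂
  refine ⟨a, b, hab, ?_⟩
  rintro w₁ w₂ rfl rfl
  have hn₁ := dotProduct_self_rotate_fst horth a b
  have hn₂ := dotProduct_self_rotate_snd horth a b
  exact ⟨sq_dotProduct_rotate_add_sq hab u₁ u₂, ⟨hw₁.trans_eq hn₁.symm, hn₂.trans_le hw₂⟩,
    heq.imp hn₁.trans hn₂.trans⟩

theorem stmt8 (m : ℕ) (hm : 1 ≤ m) (u₁ u₂ : Fin m → ℝ)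
    (horth : ∑ i, u₁ i * u₂ i = 0) (t₁ t₂ : ℝ)
    (h₁ : t₁ ≤ ∑ i, u₁ i * u₁ i) (h₁₂ : t₂ ≤ t₁) (h₂ : ∑ i, u₂ i * u₂ i ≤ t₂) :
    ∃ a b : ℝ, a ^ 2 + b ^ 2 = 1 ∧
      ∀ w₁ w₂ : Fin m → ℝ,
        w₁ = (fun i => a * u₁ i - b * u₂ i) → w₂ = (fun i => b * u₁ i + a * u₂ i) →
        (∀ x : Fin m → ℝ,
          (∑ i, w₁ i * x i) ^ 2 + (∑ i, w₂ i * x i) ^ 2 =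
            (∑ i, u₁ i * x i) ^ 2 + (∑ i, u₂ i * x i) ^ 2) ∧
        (t₁ ≤ ∑ i, w₁ i * w₁ i ∧ ∑ i, w₂ i * w₂ i ≤ t₂) ∧
        (∑ i, w₁ i * w₁ i = t₁ ∨ ∑ i, w₂ i * w₂ i = t₂) :=
  stmt8_general m u₁ u₂ horth t₁ t₂ h₁ h₁₂ h₂
end

section
/- Let k > 2 be an integer and define μ : [0,1] → ℝ by μ(0) = k−1 and μ(p) = (1−(1−p)^{k−1})/p for p ∈ (0,1]. Then μ is continuous on [0,1], strictly monotonically decreasing on [0,1], and maps [0,1] bijectively onto the interval [1, k−1]. -/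
/-!
For `k ≥ 1` the difference quotient `μ(p) = (1 - (1 - p)^(k-1)) / p` is the geometric sum
`∑_{i < k-1} (1 - p)^i`, whose value `k - 1` at `p = 0` is exactly the prescribed `μ(0)`.
This polynomial is continuous, and on `p ≤ 1` each term `(1 - p)^i` is nonincreasing; for `k > 2`
the sum contains the strictly decreasing term `1 - p`. The intermediate value theorem then makes `μ` a bijection from `[0, 1]`
onto `[μ 1, μ 0] = [1, k - 1]`.
-/

open Set Finset

/-- `μ(p)`: `k/v` times the marginal utility of competing in a battlefield of
value `v` in the `k`-player Boolean General Lotto game, when each of the other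
`k−1` players independently competes with probability `p`. -/
noncomputable def muFun (k : ℕ) (p : ℝ) : ℝ :=
  if p = 0 then (k : ℝ) - 1 else (1 - (1 - p) ^ (k - 1)) / p

theorem StrictAntiOn.bijOn_Icc {α δ : Type*} [ConditionallyCompleteLinearOrder α]
    [TopologicalSpace α] [OrderTopology α] [DenselyOrdered α] [LinearOrder δ]
    [TopologicalSpace δ] [OrderClosedTopology δ] {f : α → δ} {a b : α}
    (hf : StrictAntiOn f (Icc a b)) (hab : a ≤ b) (hcont : ContinuousOn f (Icc a b)) :
    BijOn f (Icc a b) (Icc (f b) (f a)) :=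
  ⟨hf.antitoneOn.mapsTo_Icc, hf.injOn, intermediate_value_Icc' hab hcont⟩

namespace muFun

theorem eq_geom_sum {k : ℕ} (hk : 1 ≤ k) (p : ℝ) :
    muFun k p = ∑ i ∈ range (k - 1), (1 - p) ^ i := by
  unfold muFun
  split_ifs with hp
  · simp [hp, Nat.cast_sub hk]
  · rw [div_eq_iff hp]
    linear_combination geom_sum_mul (1 - p) (k - 1)

theorem apply_zero (k : ℕ) : muFun k 0 = (k : ℝ) - 1 := if_pos rfl

theorem apply_one {k : ℕ} (hk : 2 ≤ k) : muFun k 1 = 1 := by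
  simp [muFun, show k - 1 ≠ 0 by omega]

theorem continuous {k : ℕ} (hk : 1 ≤ k) : Continuous (muFun k) := by
  rw [funext (eq_geom_sum hk)]
  fun_prop

theorem strictAntiOn {k : ℕ} (hk : 2 < k) : StrictAntiOn (muFun k) (Iic 1) := by
  intro p hp q hq hpq
  rw [eq_geom_sum (by omega), eq_geom_sum (by omega)]
  refine sum_lt_sum (fun i _ ↦ pow_le_pow_left₀ (sub_nonneg.2 hq) (by linarith) i)
    ⟨1, mem_range.2 (by omega), ?_⟩
  simpa using hpq

end muFun

theorem stmt10 (k : ℕ) (hk : 2 < k) :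
    ContinuousOn (muFun k) (Set.Icc 0 1) ∧
    StrictAntiOn (muFun k) (Set.Icc 0 1) ∧
    Set.BijOn (muFun k) (Set.Icc 0 1) (Set.Icc 1 ((k : ℝ) - 1)) := by
  have hcont : ContinuousOn (muFun k) (Icc 0 1) := (muFun.continuous (by omega)).continuousOn
  have hanti : StrictAntiOn (muFun k) (Icc 0 1) := (muFun.strictAntiOn hk).mono Icc_subset_Iic_self
  have hbij := hanti.bijOn_Icc zero_le_one hcont
  rw [muFun.apply_one hk.le, muFun.apply_zero] at hbij
  exact ⟨hcont, hanti, hbij⟩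
end

section
/- Let k ≥ 3 be an integer and define μ : [0,1] → ℝ by μ(0) = k−1 and μ(p) = (1−(1−p)^{k−1})/p for p ∈ (0,1]. Then for all p, q ∈ [0,1], |μ(p) − μ(q)| ≥ |p − q|; equivalently, the derivative of μ on (0,1) satisfies μ'(p) = ((1−p)^{k−2}(1+p(k−2)) − 1)/p² ≤ −1 for all p ∈ (0,1). -/
open Finset Filter Topology

lemma muFun_eq_geom_sum {k : ℕ} (hk : 1 ≤ k) (p : ℝ) :
    muFun k p = ∑ i ∈ range (k - 1), (1 - p) ^ i := by
  unfold muFun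
  split_ifs with hp
  · simp [hp, Nat.cast_sub hk]
  · rw [geom_sum_eq (by contrapose! hp; linarith), div_eq_div_iff hp (by simpa using hp)]
    ring

lemma sub_le_muFun_sub {k : ℕ} (hk : 3 ≤ k) {p q : ℝ} (hq : q ≤ 1) (hpq : p ≤ q) :
    q - p ≤ muFun k p - muFun k q := by
  rw [muFun_eq_geom_sum (by omega), muFun_eq_geom_sum (by omega), ← sum_sub_distrib]
  have hterm : ∀ i ∈ range (k - 1), 0 ≤ (1 - p) ^ i - (1 - q) ^ i := fun i _ =>
    sub_nonneg.2 (pow_le_pow_left₀ (by linarith) (by linarith) i)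
  simpa using single_le_sum hterm (mem_range.2 (by omega : 1 < k - 1))

lemma abs_sub_le_abs_muFun_sub {k : ℕ} (hk : 3 ≤ k) {p q : ℝ} (hp : p ≤ 1) (hq : q ≤ 1) :
    |p - q| ≤ |muFun k p - muFun k q| := by
  wlog hpq : p ≤ q generalizing p q
  · rw [abs_sub_comm, abs_sub_comm (muFun k p)]
    exact this hq hp (le_of_not_ge hpq)
  rw [abs_sub_comm, abs_of_nonneg (sub_nonneg.2 hpq)]
  exact (sub_le_muFun_sub hk hq hpq).trans (le_abs_self _)

lemma hasDerivAt_muFun_geom_sum {k : ℕ} (hk : 1 ≤ k) (p : ℝ) :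
    HasDerivAt (muFun k) (-∑ i ∈ range (k - 1), (i : ℝ) * (1 - p) ^ (i - 1)) p := by
  rw [funext (muFun_eq_geom_sum hk), ← sum_neg_distrib]
  refine HasDerivAt.fun_sum fun i _ => ?_
  simpa using ((hasDerivAt_id' p).const_sub 1).fun_pow i

lemma deriv_muFun_le_neg_one {k : ℕ} (hk : 3 ≤ k) {p : ℝ} (hp : p ≤ 1) :
    deriv (muFun k) p ≤ -1 := by
  rw [(hasDerivAt_muFun_geom_sum (by omega) p).deriv, neg_le_neg_iff]
  have hterm : ∀ i ∈ range (k - 1), 0 ≤ (i : ℝ) * (1 - p) ^ (i - 1) := fun i _ =>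
    mul_nonneg i.cast_nonneg (pow_nonneg (by linarith) _)
  simpa using single_le_sum hterm (mem_range.2 (by omega : 1 < k - 1))

lemma muFun_eventuallyEq {k : ℕ} {p : ℝ} (hp : p ≠ 0) :
    muFun k =ᶠ[𝓝 p] fun x => (1 - (1 - x) ^ (k - 1)) / x := by
  filter_upwards [isOpen_ne.mem_nhds hp] with x hx
  simp [muFun, hx]

lemma hasDerivAt_muFun {k : ℕ} (hk : 2 ≤ k) {p : ℝ} (hp : p ≠ 0) :
    HasDerivAt (muFun k) (((1 - p) ^ (k - 2) * (1 + p * ((k : ℝ) - 2)) - 1) / p ^ 2) p := by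
  obtain ⟨n, rfl⟩ : ∃ n, k = n + 2 := ⟨k - 2, by omega⟩
  have hquot := ((((hasDerivAt_id' p).const_sub 1).fun_pow (n + 1)).const_sub 1).fun_div
    (hasDerivAt_id' p) hp
  refine (hquot.congr_of_eventuallyEq (muFun_eventuallyEq (k := n + 2) hp)).congr_deriv ?_
  simp only [Nat.add_sub_cancel]
  push_cast
  ring

theorem stmt11 (k : ℕ) (hk : 3 ≤ k) :
    (∀ p ∈ Set.Icc (0 : ℝ) 1, ∀ q ∈ Set.Icc (0 : ℝ) 1,
      |p - q| ≤ |muFun k p - muFun k q|) ∧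
    (∀ p ∈ Set.Ioo (0 : ℝ) 1,
      deriv (muFun k) p = ((1 - p) ^ (k - 2) * (1 + p * ((k : ℝ) - 2)) - 1) / p ^ 2 ∧
      deriv (muFun k) p ≤ -1) :=
  ⟨fun _ hp _ hq => abs_sub_le_abs_muFun_sub hk hp.2 hq.2, fun _ hp =>
    ⟨(hasDerivAt_muFun (by omega) hp.1.ne').deriv, deriv_muFun_le_neg_one hk hp.2.le⟩⟩
end

section
/- Let k ≥ 3 be an integer, let v_1 ≥ v_2 ≥ … ≥ v_n > 0, and let B be an integer with 0 ≤ B ≤ n. With p*_j = m_{v_j}^{-1}(x*) for each j ∈ [n], we have Σ_{j=1}^n p*_j = B, and for every q ∈ [0,1]^n with Σ_{j=1}^n q_j ≤ B, Σ_{j=1}^n [q_j·u_1(p*_j, v_j) + (1−q_j)·u_0(p*_j, v_j)] ≤ Σ_{j=1}^n [p*_j·u_1(p*_j, v_j) + (1−p*_j)·u_0(p*_j, v_j)]. That is, (p*_1,…,p*_n) is a symmetric Nash equilibrium of the Boolean-valued General Lotto game: no player can improve her expected utility by unilaterally deviating to another vector of competition probabilities meeting the expected budget constraint. -/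
/-!
Competing instead of staying out gains `m_v(p)`, so a deviation from `p*` to `q` changes a
player's payoff by `∑ⱼ (qⱼ - p*ⱼ) m_{vⱼ}(p*ⱼ)`. By construction `m_{vⱼ}(p*ⱼ)` is `x*` clamped to
`[vⱼ/k, (k-1)vⱼ/k]`, so it exceeds `x*` only where `p*ⱼ = 1` and falls below it only where
`p*ⱼ = 0`; hence every term is at most `(qⱼ - p*ⱼ) x*`. Each `m_{vⱼ}⁻¹` is continuous, so the budget
binds at `x*`, and the sum of these bounds is `(∑ⱼ qⱼ - B) x* ≤ 0` because `x* ≥ 0`.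
-/

/-- Marginal utility `m_v(p)` of competing in a battlefield of value `v` in the
`k`-player Boolean General Lotto game, when each of the other `k−1` players
independently competes with probability `p`. -/
noncomputable def mMarg (k : ℕ) (v p : ℝ) : ℝ :=
  if p = 0 then ((k : ℝ) - 1) * v / k else (v / k) * ((1 - (1 - p) ^ (k - 1)) / p)

/-- Expected share of a value-`v` battlefield from *not* competing. -/
noncomputable def u0 (k : ℕ) (p v : ℝ) : ℝ := (v / k) * (1 - p) ^ (k - 1)

/-- Expected share of a value-`v` battlefield from competing. -/
noncomputable def u1 (k : ℕ) (p v : ℝ) : ℝ :=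
  v * ∑ t ∈ Finset.range k,
    ((k - 1).choose t : ℝ) * p ^ t * (1 - p) ^ (k - 1 - t) / ((t : ℝ) + 1)

open Set Filter Topology

noncomputable def payoff (k : ℕ) (q p v : ℝ) : ℝ := q * u1 k p v + (1 - q) * u0 k p v

lemma sum_choose_div_succ_mul {k : ℕ} (hk : 0 < k) (p : ℝ) :
    (∑ t ∈ Finset.range k,
        ((k - 1).choose t : ℝ) * p ^ t * (1 - p) ^ (k - 1 - t) / ((t : ℝ) + 1)) * (k * p) =
      1 - (1 - p) ^ k := by
  -- `k * C(k-1, t) = (t+1) * C(k, t+1)` turns the sum into the binomial expansion of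
  -- `(p + (1-p))^k`
  have hterm : ∀ t ∈ Finset.range k,
      ((k - 1).choose t : ℝ) * p ^ t * (1 - p) ^ (k - 1 - t) / ((t : ℝ) + 1) * (k * p) =
        p ^ (t + 1) * (1 - p) ^ (k - (t + 1)) * (k.choose (t + 1) : ℝ) := by
    intro t _
    have hchoose : (k : ℝ) * ((k - 1).choose t : ℝ) = (k.choose (t + 1) : ℝ) * ((t : ℝ) + 1) := by
      have h := Nat.add_one_mul_choose_eq (k - 1) t
      rw [Nat.sub_add_cancel hk] at h
      exact_mod_cast h
    rw [show k - (t + 1) = k - 1 - t by omega, div_mul_eq_mul_div,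
      div_eq_iff (by positivity : ((t : ℝ) + 1) ≠ 0)]
    linear_combination (p ^ t * p * (1 - p) ^ (k - 1 - t)) * hchoose
  have hbinom : ∑ i ∈ Finset.range (k + 1), p ^ i * (1 - p) ^ (k - i) * (k.choose i : ℝ) = 1 := by
    simpa using (add_pow p (1 - p) k).symm
  rw [Finset.sum_range_succ'] at hbinom
  rw [Finset.sum_mul, Finset.sum_congr rfl hterm]
  simp only [pow_zero, Nat.sub_zero, Nat.choose_zero_right, Nat.cast_one, one_mul, mul_one]
    at hbinom
  linarith

lemma u1_sub_u0 {k : ℕ} (hk : 0 < k) (p v : ℝ) : u1 k p v - u0 k p v = mMarg k v p := by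
  have hk' : (k : ℝ) ≠ 0 := by positivity
  rcases eq_or_ne p 0 with rfl | hp
  · have hsum : ∑ t ∈ Finset.range k,
        ((k - 1).choose t : ℝ) * (0 : ℝ) ^ t * (1 - 0) ^ (k - 1 - t) / ((t : ℝ) + 1) = 1 := by
      rw [Finset.sum_eq_single_of_mem 0 (Finset.mem_range.2 hk)]
      · norm_num
      · intro t _ ht
        simp [zero_pow ht]
    rw [u1, u0, mMarg, if_pos rfl, hsum]
    field_simp
    ring
  · have key := sum_choose_div_succ_mul hk p
    rw [← pow_sub_one_mul hk.ne', mul_comm] at key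
    rw [u1, u0, mMarg, if_neg hp]
    field_simp
    linear_combination v * key

lemma payoff_sub_payoff {k : ℕ} (hk : 0 < k) (q q' p v : ℝ) :
    payoff k q p v - payoff k q' p v = (q - q') * mMarg k v p := by
  rw [payoff, payoff, ← u1_sub_u0 hk]
  ring

lemma mMarg_eq_geom_sum {k : ℕ} (hk : 0 < k) (v p : ℝ) :
    mMarg k v p = v / k * ∑ i ∈ Finset.range (k - 1), (1 - p) ^ i := by
  rw [mMarg]
  split_ifs with hp
  · subst hp
    simp only [sub_zero, one_pow, Finset.sum_const, Finset.card_range, nsmul_eq_mul, mul_one]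
    rw [Nat.cast_sub hk]
    ring
  · congr 1
    rw [div_eq_iff hp]
    linear_combination geom_sum_mul (1 - p) (k - 1)

lemma mMarg_zero (k : ℕ) (v : ℝ) : mMarg k v 0 = ((k : ℝ) - 1) * v / k := by
  simp [mMarg]

lemma mMarg_one {k : ℕ} (hk : 2 ≤ k) (v : ℝ) : mMarg k v 1 = v / k := by
  rw [mMarg, if_neg one_ne_zero, sub_self, zero_pow (by omega : k - 1 ≠ 0)]
  ring

lemma continuous_mMarg {k : ℕ} (hk : 0 < k) (v : ℝ) : Continuous (mMarg k v) := by
  rw [funext (mMarg_eq_geom_sum hk v)]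
  fun_prop

lemma strictAntiOn_mMarg {k : ℕ} (hk : 3 ≤ k) {v : ℝ} (hv : 0 < v) :
    StrictAntiOn (mMarg k v) (Iic 1) := by
  intro x _ y hy hxy
  rw [mMarg_eq_geom_sum (by omega), mMarg_eq_geom_sum (by omega)]
  gcongr ?_ * ?_
  refine Finset.sum_lt_sum (fun i _ => ?_) ⟨1, Finset.mem_range.2 (by omega), ?_⟩
  · exact pow_le_pow_left₀ (sub_nonneg.2 hy) (by linarith) i
  · simpa using hxy

lemma surjOn_mMarg {k : ℕ} (hk : 2 ≤ k) (v : ℝ) :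
    SurjOn (mMarg k v) (Icc 0 1) (Icc (v / k) (((k : ℝ) - 1) * v / k)) := by
  have h :=
    intermediate_value_Icc' zero_le_one (continuous_mMarg (k := k) (by omega) v).continuousOn
  rwa [mMarg_one hk, mMarg_zero] at h

lemma continuous_of_antitone_of_range_eq_Icc {f : ℝ → ℝ} {a b : ℝ} (hf : Antitone f)
    (hrange : range f = Icc a b) : Continuous f := by
  have hmem : ∀ x, f x ∈ Icc a b := fun x => hrange.subset (mem_range_self x)
  let F : ℝ → (Icc a b)ᵒᵈ := fun x => OrderDual.toDual ⟨f x, hmem x⟩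
  have hmono : Monotone F := fun x y hxy => hf hxy
  have hsurj : Function.Surjective F := by
    intro y
    obtain ⟨x, hx⟩ := hrange.ge (OrderDual.ofDual y).2
    exact ⟨x, Subtype.ext hx⟩
  exact continuous_subtype_val.comp (continuous_ofDual.comp (hmono.continuous_of_surjective hsurj))

lemma apply_sInf_sublevel_eq {F : ℝ → ℝ} (hF : Continuous F) {c : ℝ}
    (hne : {x | F x ≤ c}.Nonempty) (hbdd : BddBelow {x | F x ≤ c}) :
    F (sInf {x | F x ≤ c}) = c := by
  set x₀ := sInf {x | F x ≤ c}
  have hmem : F x₀ ≤ c := (isClosed_le hF continuous_const).csInf_mem hne hbdd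
  refine hmem.antisymm (not_lt.1 fun hlt => ?_)
  obtain ⟨y, hy, hyx⟩ :=
    (((hF.continuousAt.eventually_lt_const hlt).filter_mono nhdsWithin_le_nhds).and
      self_mem_nhdsWithin : ∀ᶠ y in 𝓝[<] x₀, F y < c ∧ y < x₀).exists
  exact (csInf_le hbdd hy.le).not_gt hyx

structure IsExtendedInverse (k : ℕ) (v : ℝ) (g : ℝ → ℝ) : Prop where
  apply_mMarg : ∀ p ∈ Icc (0 : ℝ) 1, g (mMarg k v p) = p
  eq_one_of_lt : ∀ x, x < v / k → g x = 1
  eq_zero_of_gt : ∀ x, ((k : ℝ) - 1) * v / k < x → g x = 0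

namespace IsExtendedInverse

variable {k : ℕ} {v : ℝ} {g : ℝ → ℝ}

lemma mMarg_apply_of_mem (hg : IsExtendedInverse k v g) (hk : 2 ≤ k) {x : ℝ}
    (hx : x ∈ Icc (v / k) (((k : ℝ) - 1) * v / k)) : g x ∈ Icc 0 1 ∧ mMarg k v (g x) = x := by
  obtain ⟨p, hp, rfl⟩ := surjOn_mMarg hk v hx
  rw [hg.apply_mMarg p hp]
  exact ⟨hp, rfl⟩

lemma mem_Icc (hg : IsExtendedInverse k v g) (hk : 2 ≤ k) (x : ℝ) : g x ∈ Icc 0 1 := by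
  rcases lt_or_ge x (v / k) with hlo | hlo
  · simp [hg.eq_one_of_lt x hlo]
  rcases lt_or_ge (((k : ℝ) - 1) * v / k) x with hhi | hhi
  · simp [hg.eq_zero_of_gt x hhi]
  exact (hg.mMarg_apply_of_mem hk ⟨hlo, hhi⟩).1

lemma mMarg_apply (hg : IsExtendedInverse k v g) (hk : 2 ≤ k) (hv : 0 ≤ v) (x : ℝ) :
    mMarg k v (g x) = max (v / k) (min x (((k : ℝ) - 1) * v / k)) := by
  have hle : v / k ≤ ((k : ℝ) - 1) * v / k := by
    have : (2 : ℝ) ≤ k := by exact_mod_cast hk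
    gcongr
    nlinarith
  rcases lt_or_ge x (v / k) with hlo | hlo
  · rw [hg.eq_one_of_lt x hlo, mMarg_one hk, max_eq_left ((min_le_left _ _).trans hlo.le)]
  rcases lt_or_ge (((k : ℝ) - 1) * v / k) x with hhi | hhi
  · rw [hg.eq_zero_of_gt x hhi, mMarg_zero, min_eq_right hhi.le, max_eq_right hle]
  rw [(hg.mMarg_apply_of_mem hk ⟨hlo, hhi⟩).2, min_eq_left hhi, max_eq_right hlo]

lemma antitone (hg : IsExtendedInverse k v g) (hk : 3 ≤ k) (hv : 0 < v) : Antitone g := by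
  intro x y hxy
  have hanti := (strictAntiOn_mMarg hk hv).mono (Icc_subset_Iic_self (a := 0))
  rw [← hanti.le_iff_ge (hg.mem_Icc (by omega) x) (hg.mem_Icc (by omega) y),
    hg.mMarg_apply (by omega) hv.le, hg.mMarg_apply (by omega) hv.le]
  gcongr

lemma range_eq (hg : IsExtendedInverse k v g) (hk : 2 ≤ k) : range g = Icc 0 1 :=
  (range_subset_iff.2 (hg.mem_Icc hk)).antisymm fun p hp => ⟨_, hg.apply_mMarg p hp⟩

lemma continuous (hg : IsExtendedInverse k v g) (hk : 3 ≤ k) (hv : 0 < v) : Continuous g :=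
  continuous_of_antitone_of_range_eq_Icc (hg.antitone hk hv) (hg.range_eq (by omega))

lemma sub_mul_mMarg_apply_le (hg : IsExtendedInverse k v g) (hk : 2 ≤ k) {q : ℝ}
    (hq : q ∈ Icc 0 1) (x : ℝ) : (q - g x) * mMarg k v (g x) ≤ (q - g x) * x := by
  rcases lt_or_ge x (v / k) with hlo | hlo
  · rw [hg.eq_one_of_lt x hlo, mMarg_one hk]
    exact mul_le_mul_of_nonpos_left hlo.le (by linarith [hq.2])
  rcases lt_or_ge (((k : ℝ) - 1) * v / k) x with hhi | hhi
  · rw [hg.eq_zero_of_gt x hhi, mMarg_zero, sub_zero]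
    exact mul_le_mul_of_nonneg_left hhi.le hq.1
  rw [(hg.mMarg_apply_of_mem hk ⟨hlo, hhi⟩).2]

end IsExtendedInverse

lemma sInf_nonneg_and_sum_apply_sInf_eq {ι : Type*} [Fintype ι] {k : ℕ} (hk : 3 ≤ k)
    {v : ι → ℝ} (hv : ∀ j, 0 < v j) {g : ι → ℝ → ℝ} (hg : ∀ j, IsExtendedInverse k (v j) (g j))
    {B : ℝ} (hB₀ : 0 ≤ B) (hB : B ≤ Fintype.card ι) :
    0 ≤ sInf {x | ∑ j, g j x ≤ B} ∧ ∑ j, g j (sInf {x | ∑ j, g j x ≤ B}) = B := by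
  have hk₀ : (0 : ℝ) < k := by positivity
  have hsum_of_nonpos : ∀ x ≤ 0, ∑ j, g j x = Fintype.card ι := fun x hx => by
    have hlt : ∀ j, x < v j / k := fun j => hx.trans_lt (div_pos (hv j) hk₀)
    simp [fun j => (hg j).eq_one_of_lt x (hlt j)]
  rcases hB.lt_or_eq with hlt | rfl
  · have hpos : ∀ x ∈ {x | ∑ j, g j x ≤ B}, 0 ≤ x := fun x hx => by
      by_contra! hneg
      linarith [hsum_of_nonpos x hneg.le, mem_ofPred_eq ▸ hx]
    have hne : {x | ∑ j, g j x ≤ B}.Nonempty := by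
      refine ⟨∑ j, v j, ?_⟩
      rw [mem_ofPred_eq, Finset.sum_eq_zero fun j _ => (hg j).eq_zero_of_gt _ ?_]
      · exact hB₀
      calc ((k : ℝ) - 1) * v j / k < v j := by
            rw [div_lt_iff₀ hk₀]
            linarith [hv j]
        _ ≤ ∑ j, v j := Finset.single_le_sum (fun i _ => (hv i).le) (Finset.mem_univ j)
    have hcont : Continuous fun x => ∑ j, g j x :=
      continuous_finsetSum _ fun j _ => (hg j).continuous hk (hv j)
    exact ⟨le_csInf hne hpos, apply_sInf_sublevel_eq hcont hne ⟨0, hpos⟩⟩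
  -- the sublevel set is all of `ℝ`: the junk value `sInf univ = 0` stands in for `x* = -∞`
  · have huniv : {x | ∑ j, g j x ≤ Fintype.card ι} = univ := eq_univ_of_forall fun x =>
      (Finset.sum_le_sum fun j _ => ((hg j).mem_Icc (by omega) x).2).trans (by simp)
    rw [huniv, Real.sInf_univ]
    exact ⟨le_rfl, hsum_of_nonpos 0 le_rfl⟩

theorem stmt13_general (k n : ℕ) (hk : 3 ≤ k) (B : ℕ) (hB : B ≤ n)
    (v : Fin n → ℝ) (hv : ∀ j, 0 < v j)
    -- `minv j` is the extended inverse `m_{v_j}^{-1} : ℝ → [0,1]`: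
    (minv : Fin n → ℝ → ℝ)
    (hminv_inv : ∀ j, ∀ p ∈ Set.Icc (0 : ℝ) 1, minv j (mMarg k (v j) p) = p)
    (hminv_lo : ∀ j, ∀ x : ℝ, x < v j / k → minv j x = 1)
    (hminv_hi : ∀ j, ∀ x : ℝ, ((k : ℝ) - 1) * v j / k < x → minv j x = 0)
    -- `x* = inf {x : Σ_j m_{v_j}^{-1}(x) ≤ B}` and `p*_j = m_{v_j}^{-1}(x*)`:
    (xstar : ℝ) (hxstar : xstar = sInf {x : ℝ | ∑ j, minv j x ≤ (B : ℝ)})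
    (pstar : Fin n → ℝ) (hpstar : ∀ j, pstar j = minv j xstar) :
    ∑ j, pstar j = (B : ℝ) ∧
    ∀ q : Fin n → ℝ, (∀ j, q j ∈ Set.Icc (0 : ℝ) 1) → ∑ j, q j ≤ (B : ℝ) →
      ∑ j, (q j * u1 k (pstar j) (v j) + (1 - q j) * u0 k (pstar j) (v j)) ≤
        ∑ j, (pstar j * u1 k (pstar j) (v j) + (1 - pstar j) * u0 k (pstar j) (v j)) := by
  have hg : ∀ j, IsExtendedInverse k (v j) (minv j) := fun j =>
    ⟨hminv_inv j, hminv_lo j, hminv_hi j⟩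
  obtain ⟨hx₀, hbudget⟩ :=
    sInf_nonneg_and_sum_apply_sInf_eq hk hv hg (Nat.cast_nonneg B) (by simpa using hB)
  rw [← hxstar] at hx₀ hbudget
  simp only [← hpstar] at hbudget
  refine ⟨hbudget, fun q hq hqB => ?_⟩
  have hdeviation : ∀ j, payoff k (q j) (pstar j) (v j) - payoff k (pstar j) (pstar j) (v j) ≤
      (q j - pstar j) * xstar := fun j => by
    rw [payoff_sub_payoff (by omega), hpstar]
    exact (hg j).sub_mul_mMarg_apply_le (by omega) (hq j) xstar
  have hgain := calc
    ∑ j, (payoff k (q j) (pstar j) (v j) - payoff k (pstar j) (pstar j) (v j))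
        ≤ ∑ j, (q j - pstar j) * xstar := Finset.sum_le_sum fun j _ => hdeviation j
    _ = (∑ j, q j - B) * xstar := by rw [← Finset.sum_mul, Finset.sum_sub_distrib, hbudget]
    _ ≤ 0 := mul_nonpos_of_nonpos_of_nonneg (by linarith) hx₀
  rw [Finset.sum_sub_distrib, sub_nonpos] at hgain
  simpa only [payoff] using hgain

theorem stmt13 (k n : ℕ) (hk : 3 ≤ k) (B : ℕ) (hB : B ≤ n)
    (v : Fin n → ℝ) (hv : ∀ j, 0 < v j)
    (hsorted : ∀ i j : Fin n, i ≤ j → v j ≤ v i)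
    -- `minv j` is the extended inverse `m_{v_j}^{-1} : ℝ → [0,1]`:
    (minv : Fin n → ℝ → ℝ)
    (hminv_inv : ∀ j, ∀ p ∈ Set.Icc (0 : ℝ) 1, minv j (mMarg k (v j) p) = p)
    (hminv_lo : ∀ j, ∀ x : ℝ, x < v j / k → minv j x = 1)
    (hminv_hi : ∀ j, ∀ x : ℝ, ((k : ℝ) - 1) * v j / k < x → minv j x = 0)
    -- `x* = inf {x : Σ_j m_{v_j}^{-1}(x) ≤ B}` and `p*_j = m_{v_j}^{-1}(x*)`:
    (xstar : ℝ) (hxstar : xstar = sInf {x : ℝ | ∑ j, minv j x ≤ (B : ℝ)})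
    (pstar : Fin n → ℝ) (hpstar : ∀ j, pstar j = minv j xstar) :
    ∑ j, pstar j = (B : ℝ) ∧
    ∀ q : Fin n → ℝ, (∀ j, q j ∈ Set.Icc (0 : ℝ) 1) → ∑ j, q j ≤ (B : ℝ) →
      ∑ j, (q j * u1 k (pstar j) (v j) + (1 - q j) * u0 k (pstar j) (v j)) ≤
        ∑ j, (pstar j * u1 k (pstar j) (v j) + (1 - pstar j) * u0 k (pstar j) (v j)) :=
  stmt13_general k n hk B hB v hv minv hminv_inv hminv_lo hminv_hi xstar hxstar pstar hpstar
end

section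
/- Let n ≥ 1 and let p_1,…,p_n ∈ [0,1] satisfy Σ_{j=1}^n p_j = B for some nonnegative integer B. Then there exists a probability measure on {0,1}^n such that the j-th coordinate A_j equals 1 with probability exactly p_j for every j ∈ [n], and Σ_{j=1}^n A_j = B holds almost surely. Concretely, setting α_j = Σ_{j'<j} p_{j'} and drawing β uniformly from [0,1], the vector defined by A_j = 1 if and only if there exists an integer m with β + m ∈ [α_j, α_j + p_j) has these two properties. -/
/-!
Since `0 ≤ p_j ≤ 1`, the coordinate `A_j` is the number of integers `m` with
`β + m ∈ [α_j, α_j + p_j)`, that is `⌈α_j + p_j - β⌉ - ⌈α_j - β⌉`. Summed over `j` these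
differences telescope to `⌈B - β⌉ - ⌈-β⌉ = B`, for every `β`. The set of `β` with `A_j = 1` is
`1`-periodic, so its measure in `[0, 1]` equals its measure in the other fundamental domain
`[α_j, α_j + 1)`, where it is the interval `[α_j, α_j + p_j)`.
-/

open MeasureTheory

open Classical in
/-- Given biases `p` and a seed `β`, set `A j = 1` iff some integer translate of
`β` lands in `[α_j, α_j + p_j)`, where `α_j = Σ_{j' < j} p_{j'}`. -/
noncomputable def couplingSampler {n : ℕ} (p : Fin n → ℝ) (β : ℝ) : Fin n → Bool :=
  fun j =>
    if ∃ m : ℤ, (∑ j' ∈ Finset.Iio j, p j') ≤ β + m ∧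
        β + m < (∑ j' ∈ Finset.Iio j, p j') + p j
    then true else false

open Finset

theorem Fin.sum_sub_sum_Iio {M G : Type*} [AddCommMonoid M] [AddCommGroup G] (f : M → G) :
    ∀ {n : ℕ} (p : Fin n → M),
      ∑ j, (f (∑ i ∈ Iio j, p i + p j) - f (∑ i ∈ Iio j, p i)) = f (∑ j, p j) - f 0
  | 0, _ => by simp
  | n + 1, p => by
    rw [Fin.sum_univ_castSucc, Fin.sum_univ_castSucc p]
    simp only [Fin.sum_Iio_castSucc, Fin.sum_sub_sum_Iio f (fun i => p (Fin.castSucc i)),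
      Fin.Iio_last_eq_map, sum_map, Fin.coe_castSuccEmb]
    abel

theorem Int.exists_mem_Ico_iff_ceil_lt {α : Type*} [Ring α] [LinearOrder α]
    [IsStrictOrderedRing α] [FloorRing α] {x y : α} :
    (∃ m : ℤ, (m : α) ∈ Set.Ico x y) ↔ ⌈x⌉ < ⌈y⌉ :=
  ⟨fun ⟨_, hxm, hmy⟩ => (Int.ceil_le.2 hxm).trans_lt (Int.lt_ceil.2 hmy),
    fun h => ⟨⌈x⌉, Int.le_ceil x, Int.lt_ceil.1 h⟩⟩

def periodicIco (a b : ℝ) : Set ℝ := {β | ∃ m : ℤ, β + m ∈ Set.Ico a b}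

section periodicIco

variable {a b β : ℝ}

theorem mem_periodicIco_iff_ceil_lt : β ∈ periodicIco a b ↔ ⌈a - β⌉ < ⌈b - β⌉ := by
  simp only [periodicIco, Set.mem_ofPred_eq, ← Int.exists_mem_Ico_iff_ceil_lt, Set.mem_Ico]
  refine exists_congr fun m => and_congr ?_ ?_ <;> constructor <;> intro h <;> linarith

theorem mem_periodicIco_iff_lt (hβ : β ∈ Set.Ico a (a + 1)) : β ∈ periodicIco a b ↔ β < b := by
  have : ⌈a - β⌉ = 0 := Int.ceil_eq_zero_iff.2 ⟨by linarith [hβ.2], by linarith [hβ.1]⟩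
  rw [mem_periodicIco_iff_ceil_lt, this, Int.ceil_pos, sub_pos]

theorem indicator_periodicIco (hab : a ≤ b) (hb : b ≤ a + 1) :
    (periodicIco a b).indicator 1 β = ⌈b - β⌉ - ⌈a - β⌉ := by
  have hle : ⌈a - β⌉ ≤ ⌈b - β⌉ := Int.ceil_le_ceil (by linarith)
  have hle' : ⌈b - β⌉ ≤ ⌈a - β⌉ + 1 := by
    rw [← Int.ceil_add_one]
    exact Int.ceil_le_ceil (by linarith)
  classical
  rw [Set.indicator_apply, Pi.one_apply, mem_periodicIco_iff_ceil_lt]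
  split_ifs <;> omega

theorem periodicIco_inter_Ico (hb : b ≤ a + 1) :
    periodicIco a b ∩ Set.Ico a (a + 1) = Set.Ico a b := by
  ext β
  constructor
  · rintro ⟨h, hβ⟩
    exact ⟨hβ.1, (mem_periodicIco_iff_lt hβ).1 h⟩
  · rintro hβ
    have hβ' : β ∈ Set.Ico a (a + 1) := ⟨hβ.1, by linarith [hβ.2]⟩
    exact ⟨(mem_periodicIco_iff_lt hβ').2 hβ.2, hβ'⟩

theorem measurableSet_periodicIco : MeasurableSet (periodicIco a b) := by
  have : periodicIco a b = ⋃ m : ℤ, Set.Ico (a - m) (b - m) := by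
    ext β
    simp only [periodicIco, Set.mem_ofPred_eq, Set.mem_iUnion, Set.mem_Ico]
    refine exists_congr fun m => and_congr ?_ ?_ <;> constructor <;> intro h <;> linarith
  rw [this]
  exact .iUnion fun _ => measurableSet_Ico

theorem vadd_preimage_periodicIco (g : AddSubgroup.zmultiples (1 : ℝ)) :
    (g +ᵥ ·) ⁻¹' periodicIco a b = periodicIco a b := by
  obtain ⟨_, k, rfl⟩ := g
  ext β
  simp only [periodicIco, Set.mem_preimage, Set.mem_ofPred_eq, AddSubgroup.vadd_def, vadd_eq_add,
    zsmul_one]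
  constructor
  · rintro ⟨m, hm⟩
    exact ⟨k + m, by push_cast; rwa [add_left_comm, ← add_assoc]⟩
  · rintro ⟨m, hm⟩
    exact ⟨m - k, by push_cast; convert hm using 1; ring⟩

theorem volume_periodicIco_inter_Icc (hb : b ≤ a + 1) :
    volume (periodicIco a b ∩ Set.Icc 0 1) = ENNReal.ofReal (b - a) := by
  have hfd (t : ℝ) := isAddFundamentalDomain_Ioc zero_lt_one t
  calc volume (periodicIco a b ∩ Set.Icc 0 1)
      = volume (periodicIco a b ∩ Set.Ioc 0 (0 + 1)) := by
        rw [zero_add, ← Measure.restrict_apply' measurableSet_Icc,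
          ← Measure.restrict_apply' measurableSet_Ioc, Measure.restrict_congr_set Ioc_ae_eq_Icc]
    _ = volume (periodicIco a b ∩ Set.Ioc a (a + 1)) :=
        (hfd 0).measure_set_eq (hfd a) measurableSet_periodicIco vadd_preimage_periodicIco
    _ = volume (periodicIco a b ∩ Set.Ico a (a + 1)) := by
        rw [← Measure.restrict_apply' measurableSet_Ico,
          ← Measure.restrict_apply' measurableSet_Ioc, Measure.restrict_congr_set Ico_ae_eq_Ioc]
    _ = ENNReal.ofReal (b - a) := by rw [periodicIco_inter_Ico hb, Real.volume_Ico]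

end periodicIco

section couplingSampler

variable {n : ℕ} {p : Fin n → ℝ}

theorem setOf_couplingSampler_eq_true (p : Fin n → ℝ) (j : Fin n) :
    {β | couplingSampler p β j = true} =
      periodicIco (∑ i ∈ Iio j, p i) (∑ i ∈ Iio j, p i + p j) := by
  ext β
  simp [couplingSampler, periodicIco]

theorem measurable_couplingSampler (p : Fin n → ℝ) : Measurable (couplingSampler p) :=
  measurable_pi_iff.2 fun j =>
    measurable_to_bool <| show MeasurableSet {β | couplingSampler p β j = true} by
      rw [setOf_couplingSampler_eq_true]
      exact measurableSet_periodicIco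

theorem sum_couplingSampler_eq_ceil_sub (hp : ∀ j, p j ∈ Set.Icc (0 : ℝ) 1) (β : ℝ) :
    ∑ j, (if couplingSampler p β j then (1 : ℤ) else 0) = ⌈∑ j, p j - β⌉ - ⌈-β⌉ := by
  calc ∑ j, (if couplingSampler p β j then (1 : ℤ) else 0)
      = ∑ j, (⌈∑ i ∈ Iio j, p i + p j - β⌉ - ⌈∑ i ∈ Iio j, p i - β⌉) := by
        refine sum_congr rfl fun j _ => ?_
        rw [← indicator_periodicIco (by linarith [(hp j).1]) (by linarith [(hp j).2]),
          ← setOf_couplingSampler_eq_true]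
        by_cases h : couplingSampler p β j <;> simp [h]
    _ = ⌈∑ j, p j - β⌉ - ⌈-β⌉ := by
        rw [Fin.sum_sub_sum_Iio (fun x => ⌈x - β⌉)]
        simp

theorem sum_couplingSampler_eq {B : ℕ} (hp : ∀ j, p j ∈ Set.Icc (0 : ℝ) 1)
    (hsum : ∑ j, p j = (B : ℝ)) (β : ℝ) :
    ∑ j, (if couplingSampler p β j then (1 : ℕ) else 0) = B := by
  have h := sum_couplingSampler_eq_ceil_sub hp β
  rw [hsum, show (B : ℝ) - β = -β + B by ring, Int.ceil_add_natCast, add_sub_cancel_left] at h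
  exact_mod_cast h

theorem volume_setOf_couplingSampler_eq_true_inter_Icc (hp : ∀ j, p j ≤ 1) (j : Fin n) :
    volume ({β | couplingSampler p β j = true} ∩ Set.Icc 0 1) = ENNReal.ofReal (p j) := by
  rw [setOf_couplingSampler_eq_true, volume_periodicIco_inter_Icc (by linarith [hp j]),
    add_sub_cancel_left]

end couplingSampler

theorem stmt16_general (n : ℕ) (B : ℕ) (p : Fin n → ℝ)
    (hp : ∀ j, p j ∈ Set.Icc (0 : ℝ) 1) (hsum : ∑ j, p j = (B : ℝ)) :
    (∃ μ : Measure (Fin n → Bool), IsProbabilityMeasure μ ∧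
      (∀ j, μ {A : Fin n → Bool | A j = true} = ENNReal.ofReal (p j)) ∧
      (∀ᵐ A ∂μ, ∑ j, (if A j then (1 : ℕ) else 0) = B)) ∧
    -- concretely, the pushforward of the uniform distribution on `[0,1]`
    -- under `couplingSampler p` has these two properties:
    (IsProbabilityMeasure
        (Measure.map (couplingSampler p) (volume.restrict (Set.Icc (0 : ℝ) 1))) ∧
      (∀ j, Measure.map (couplingSampler p) (volume.restrict (Set.Icc (0 : ℝ) 1))
          {A : Fin n → Bool | A j = true} = ENNReal.ofReal (p j)) ∧
      (∀ᵐ A ∂(Measure.map (couplingSampler p) (volume.restrict (Set.Icc (0 : ℝ) 1))),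
        ∑ j, (if A j then (1 : ℕ) else 0) = B)) := by
  set μ := Measure.map (couplingSampler p) (volume.restrict (Set.Icc (0 : ℝ) 1))
  have hf := measurable_couplingSampler p
  have : IsProbabilityMeasure (volume.restrict (Set.Icc (0 : ℝ) 1)) := ⟨by simp⟩
  have hprob : IsProbabilityMeasure μ := Measure.isProbabilityMeasure_map hf.aemeasurable
  have hmarg (j : Fin n) : μ {A | A j = true} = ENNReal.ofReal (p j) := by
    rw [Measure.map_apply hf .of_discrete, Measure.restrict_apply' measurableSet_Icc]
    exact volume_setOf_couplingSampler_eq_true_inter_Icc (fun j => (hp j).2) j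
  have hcount : ∀ᵐ A ∂μ, ∑ j, (if A j then (1 : ℕ) else 0) = B :=
    (ae_map_iff hf.aemeasurable .of_discrete).2 (.of_forall (sum_couplingSampler_eq hp hsum))
  exact ⟨⟨μ, hprob, hmarg, hcount⟩, hprob, hmarg, hcount⟩

theorem stmt16 (n : ℕ) (hn : 1 ≤ n) (B : ℕ) (p : Fin n → ℝ)
    (hp : ∀ j, p j ∈ Set.Icc (0 : ℝ) 1) (hsum : ∑ j, p j = (B : ℝ)) :
    (∃ μ : Measure (Fin n → Bool), IsProbabilityMeasure μ ∧
      (∀ j, μ {A : Fin n → Bool | A j = true} = ENNReal.ofReal (p j)) ∧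
      (∀ᵐ A ∂μ, ∑ j, (if A j then (1 : ℕ) else 0) = B)) ∧
    -- concretely, the pushforward of the uniform distribution on `[0,1]`
    -- under `couplingSampler p` has these two properties:
    (IsProbabilityMeasure
        (Measure.map (couplingSampler p) (volume.restrict (Set.Icc (0 : ℝ) 1))) ∧
      (∀ j, Measure.map (couplingSampler p) (volume.restrict (Set.Icc (0 : ℝ) 1))
          {A : Fin n → Bool | A j = true} = ENNReal.ofReal (p j)) ∧
      (∀ᵐ A ∂(Measure.map (couplingSampler p) (volume.restrict (Set.Icc (0 : ℝ) 1))),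
        ∑ j, (if A j then (1 : ℕ) else 0) = B)) :=
  stmt16_general n B p hp hsum
end
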